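/- Let d ≥ 1 and let a : (0, ∞) → (0, ∞) be continuous with ∫₀¹ dt/a(t) = ∞. Then for every s₀ > 0 and every q ∈ S^d, the unit sphere in ℝ^{d+1}, there exists t₀ ∈ (0, s₀) such that for every ω ∈ S^d there is a continuous, piecewise C¹ curve σ : [t₀, s₀] → S^d with σ(t₀) = ω, σ(s₀) = q, and ‖σ′(τ)‖ < 1/a(τ) at every τ at which σ is differentiable, where ‖·‖ is the Euclidean norm of ℝ^{d+1}. -/

import Mathlib

open Filter MeasureTheory

/-- A curve `σ : [s,b] → E` is *piecewise C¹ with speed less than `1/a`* if there is a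
partition `s = t 0 < t 1 < ⋯ < t n = b` such that on each closed subinterval `σ` has a
continuous derivative whose norm is pointwise `< 1 / a`. -/
def PiecewiseC1SpeedLt {E : Type*} [NormedAddCommGroup E] [NormedSpace ℝ E]
    (a : ℝ → ℝ) (σ : ℝ → E) (s b : ℝ) : Prop :=
  ∃ n : ℕ, ∃ t : ℕ → ℝ, 0 < n ∧ t 0 = s ∧ t n = b ∧ (∀ i, i < n → t i < t (i + 1)) ∧
    ∀ i, i < n → ∃ σ' : ℝ → E,
      ContinuousOn σ' (Set.Icc (t i) (t (i + 1))) ∧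
      ∀ x ∈ Set.Icc (t i) (t (i + 1)),
        HasDerivWithinAt σ (σ' x) (Set.Icc (t i) (t (i + 1))) x ∧ ‖σ' x‖ < 1 / a x

/-!
Since `∫₀ dt/a` diverges, `t₀` can be chosen so close to `0` that `∫_{t₀}^{s₀} dt/a > π`.
Every `ω` lies on a great circle through `q` at angle `α ≤ π` from `q`. Traversing it from `ω`
to `q` with angular speed `(α / ∫_{t₀}^{s₀} dt/a) / a(t) < 1 / a(t)` reaches `q` exactly at `s₀`.
-/

open Set Real Topology
open scoped RealInnerProductSpace

theorem tendsto_setLIntegral_Ioc_nhdsGT {g : ℝ → ENNReal} {a b : ℝ}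
    (hg : AEMeasurable g (volume.restrict (Ioc a b))) :
    Tendsto (fun t => ∫⁻ x in Ioc t b, g x) (𝓝[>] a) (𝓝 (∫⁻ x in Ioc a b, g x)) := by
  have hcover := aecover_Ioc_of_Ioc (μ := volume) (l := 𝓝[>] a) (a := fun t => t)
    (b := fun _ => b) nhdsWithin_le_nhds tendsto_const_nhds
  refine (hcover.lintegral_tendsto_of_countably_generated hg).congr' ?_
  filter_upwards [self_mem_nhdsWithin] with t (ht : a < t)
  rw [Measure.restrict_restrict measurableSet_Ioc, inter_eq_self_of_subset_left
    (Ioc_subset_Ioc_left ht.le)]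

theorem tendsto_intervalIntegral_nhdsGT_atTop {f : ℝ → ℝ} {a b c : ℝ}
    (hf : ContinuousOn f (Ioi a)) (hf_nonneg : ∀ x ∈ Ioi a, 0 ≤ f x)
    (h_top : ∫⁻ x in Ioc a b, ENNReal.ofReal (f x) = ⊤) (hc : a < c) :
    Tendsto (fun t => ∫ x in t..c, f x) (𝓝[>] a) atTop := by
  have hint : ∀ t ∈ Ioi a, ∀ s ∈ Ioi a, IntervalIntegrable f volume t s := fun t ht s hs =>
    (hf.mono fun x hx => lt_of_lt_of_le (lt_min ht hs) hx.1).intervalIntegrable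
  have hab : a < b := by
    by_contra! hba
    simp [Ioc_eq_empty_of_le hba] at h_top
  have hb : Tendsto (fun t => ∫ x in t..b, f x) (𝓝[>] a) atTop := by
    rw [← ENNReal.tendsto_ofReal_nhds_top, ← h_top]
    refine (tendsto_setLIntegral_Ioc_nhdsGT ?_).congr' ?_
    · exact ((hf.mono Ioc_subset_Ioi_self).aemeasurable measurableSet_Ioc).ennreal_ofReal
    filter_upwards [Ioo_mem_nhdsGT hab] with t ht
    rw [intervalIntegral.integral_of_le ht.2.le, ofReal_integral_eq_lintegral_ofReal]
    · exact (hint t ht.1 b hab).1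
    · exact ae_restrict_of_forall_mem measurableSet_Ioc fun x hx =>
        hf_nonneg x (ht.1.trans hx.1)
  refine (tendsto_atTop_add_const_right _ (∫ x in b..c, f x) hb).congr' ?_
  filter_upwards [self_mem_nhdsWithin] with t (ht : a < t)
  exact intervalIntegral.integral_add_adjacent_intervals (hint t ht b hab) (hint b hab c hc)

theorem exists_hasDerivWithinAt_of_lt_intervalIntegral {f : ℝ → ℝ} {s b α : ℝ}
    (hsb : s ≤ b) (hf : ContinuousOn f (Icc s b)) (hf_pos : ∀ x ∈ Icc s b, 0 < f x)
    (hα : 0 ≤ α) (hαf : α < ∫ x in s..b, f x) :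
    ∃ θ θ' : ℝ → ℝ, θ s = α ∧ θ b = 0 ∧ ContinuousOn θ' (Icc s b) ∧
      ∀ x ∈ Icc s b, HasDerivWithinAt θ (θ' x) (Icc s b) x ∧ |θ' x| < f x := by
  set I := ∫ x in s..b, f x
  have hI : 0 < I := hα.trans_lt hαf
  have hαI : α / I < 1 := (div_lt_one hI).2 hαf
  refine ⟨fun τ => α - α / I * ∫ x in s..τ, f x, fun x => -(α / I * f x), by simp,
    sub_eq_zero.2 (div_mul_cancel₀ α hI.ne').symm, (continuousOn_const.mul hf).neg,
    fun x hx => ⟨?_, ?_⟩⟩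
  · have : Fact (x ∈ Icc s b) := ⟨hx⟩
    refine (HasDerivWithinAt.const_mul (α / I) ?_).const_sub α
    exact intervalIntegral.integral_hasDerivWithinAt_right
      ((hf.mono (uIcc_subset_Icc (left_mem_Icc.2 hsb) hx)).intervalIntegrable)
      (hf.stronglyMeasurableAtFilter_nhdsWithin measurableSet_Icc x) (hf x hx)
  · rw [abs_neg, abs_of_nonneg (mul_nonneg (div_nonneg hα hI.le) (hf_pos x hx).le)]
    exact mul_lt_of_lt_one_left (hf_pos x hx) hαI

theorem PiecewiseC1SpeedLt.of_hasDerivWithinAt {E : Type*} [NormedAddCommGroup E]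
    [NormedSpace ℝ E] {a : ℝ → ℝ} {σ σ' : ℝ → E} {s b : ℝ} (hsb : s < b)
    (hσ' : ContinuousOn σ' (Icc s b))
    (hσ : ∀ x ∈ Icc s b, HasDerivWithinAt σ (σ' x) (Icc s b) x ∧ ‖σ' x‖ < 1 / a x) :
    PiecewiseC1SpeedLt a σ s b := by
  refine ⟨1, fun i => if i = 0 then s else b, one_pos, rfl, rfl, ?_, ?_⟩ <;>
    intro i hi <;> obtain rfl : i = 0 := by omega
  exacts [hsb, ⟨σ', hσ', hσ⟩]

section

variable {E : Type*} [NormedAddCommGroup E] [InnerProductSpace ℝ E]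

noncomputable def greatCircle (q u : E) (θ : ℝ) : E := cos θ • q + sin θ • u

@[simp]
theorem greatCircle_zero (q u : E) : greatCircle q u 0 = q := by simp [greatCircle]

theorem continuous_greatCircle (q u : E) : Continuous (greatCircle q u) := by
  unfold greatCircle; fun_prop

theorem hasDerivAt_greatCircle (q u : E) (θ : ℝ) :
    HasDerivAt (greatCircle q u) (greatCircle q u (θ + π / 2)) θ := by
  rw [greatCircle, cos_add_pi_div_two, sin_add_pi_div_two]
  exact ((hasDerivAt_cos θ).smul_const q).add ((hasDerivAt_sin θ).smul_const u)

theorem norm_greatCircle {q u : E} (hq : ‖q‖ = 1) (hu : ‖u‖ = 1) (hqu : ⟪q, u⟫ = 0) (θ : ℝ) :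
    ‖greatCircle q u θ‖ = 1 := by
  have h : ‖greatCircle q u θ‖ ^ 2 = 1 := by
    rw [greatCircle, norm_add_sq_real, real_inner_smul_left, real_inner_smul_right, hqu,
      norm_smul, norm_smul, hq, hu, norm_eq_abs, norm_eq_abs]
    simp [sq_abs, cos_sq_add_sin_sq]
  exact (pow_eq_one_iff_of_nonneg (norm_nonneg _) two_ne_zero).1 h

theorem exists_unit_orthogonal [FiniteDimensional ℝ E] (hE : 2 ≤ Module.finrank ℝ E) (q : E)
    {w : E} (hw : ⟪q, w⟫ = 0) : ∃ u : E, ‖u‖ = 1 ∧ ⟪q, u⟫ = 0 ∧ w = ‖w‖ • u := by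
  by_cases hw0 : w = 0
  · have hrank : 1 ≤ Module.finrank ℝ (ℝ ∙ q)ᗮ := by
      have hsum := (ℝ ∙ q).finrank_add_finrank_orthogonal
      have hspan := finrank_span_le_card (R := ℝ) ({q} : Set E)
      simp only [toFinset_singleton, Finset.card_singleton] at hspan
      omega
    obtain ⟨v, hv, hv0⟩ := Submodule.exists_mem_ne_zero_of_ne_bot
      (Submodule.one_le_finrank_iff.1 hrank)
    refine ⟨‖v‖⁻¹ • v, norm_smul_inv_norm hv0, ?_, by simp [hw0]⟩
    rw [real_inner_smul_right, Submodule.inner_right_of_mem_orthogonal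
      (Submodule.mem_span_singleton_self q) hv, mul_zero]
  · refine ⟨‖w‖⁻¹ • w, norm_smul_inv_norm hw0, by rw [real_inner_smul_right, hw, mul_zero], ?_⟩
    rw [smul_smul, mul_inv_cancel₀ (norm_ne_zero_iff.2 hw0), one_smul]

theorem exists_greatCircle_eq [FiniteDimensional ℝ E] (hE : 2 ≤ Module.finrank ℝ E) {q ω : E}
    (hq : ‖q‖ = 1) (hω : ‖ω‖ = 1) :
    ∃ u : E, ‖u‖ = 1 ∧ ⟪q, u⟫ = 0 ∧ ∃ α ∈ Icc 0 π, greatCircle q u α = ω := by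
  set c := ⟪q, ω⟫
  set w := ω - c • q
  have hqw : ⟪q, w⟫ = 0 := by
    rw [inner_sub_right, real_inner_smul_right, real_inner_self_eq_norm_sq, hq]; ring
  have hw : ‖w‖ ^ 2 = 1 - c ^ 2 := by
    rw [norm_sub_sq_real, real_inner_smul_right, real_inner_comm, norm_smul, hω, hq, norm_eq_abs]
    simp only [sq_abs, mul_one, one_pow]
    ring
  have hc : |c| ≤ 1 := by simpa [hq, hω] using abs_real_inner_le_norm q ω
  obtain ⟨u, hu, hqu, hwu⟩ := exists_unit_orthogonal hE q hqw
  refine ⟨u, hu, hqu, arccos c, ⟨arccos_nonneg c, arccos_le_pi c⟩, ?_⟩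
  rw [greatCircle, cos_arccos (neg_le_of_abs_le hc) (le_of_abs_le hc), sin_arccos, ← hw,
    sqrt_sq (norm_nonneg w), ← hwu, add_sub_cancel]

theorem PiecewiseC1SpeedLt.greatCircle_comp {q u : E} (hq : ‖q‖ = 1) (hu : ‖u‖ = 1)
    (hqu : ⟪q, u⟫ = 0) {a θ θ' : ℝ → ℝ} {s b : ℝ} (hsb : s < b)
    (hθ' : ContinuousOn θ' (Icc s b))
    (hθ : ∀ x ∈ Icc s b, HasDerivWithinAt θ (θ' x) (Icc s b) x ∧ |θ' x| < 1 / a x) :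
    PiecewiseC1SpeedLt a (greatCircle q u ∘ θ) s b := by
  have hθc : ContinuousOn θ (Icc s b) := fun x hx => (hθ x hx).1.continuousWithinAt
  refine .of_hasDerivWithinAt hsb (σ' := fun x => θ' x • greatCircle q u (θ x + π / 2))
    (hθ'.smul ((continuous_greatCircle q u).comp_continuousOn (hθc.add continuousOn_const)))
    fun x hx => ⟨(hasDerivAt_greatCircle q u (θ x)).scomp_hasDerivWithinAt x (hθ x hx).1, ?_⟩
  rw [norm_smul, norm_greatCircle hq hu hqu, mul_one, norm_eq_abs]
  exact (hθ x hx).2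

end

/-- Let `d ≥ 1` and `a : (0,∞) → (0,∞)` continuous with `∫₀¹ dt/a(t) = ∞` (no particle
horizons). Then for every `s₀ > 0` and every `q ∈ S^d ⊆ ℝ^{d+1}` there is
`t₀ ∈ (0, s₀)` such that every `ω ∈ S^d` can be joined to `q` by a continuous,
piecewise `C¹` curve `σ : [t₀, s₀] → S^d` with `σ t₀ = ω`, `σ s₀ = q`, whose speed is
`< 1/a` wherever it is differentiable. -/
theorem flrw_spherical_slice_in_timelike_past
    (d : ℕ) (hd : 1 ≤ d)
    (a : ℝ → ℝ) (ha_pos : ∀ t > (0:ℝ), 0 < a t) (ha_cont : ContinuousOn a (Set.Ioi 0))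
    (ha_noPH : ∫⁻ t in Set.Ioc (0:ℝ) 1, ENNReal.ofReal (1 / a t) = ⊤) :
    ∀ s₀ > (0:ℝ), ∀ q : EuclideanSpace ℝ (Fin (d + 1)), ‖q‖ = 1 →
      ∃ t₀ ∈ Set.Ioo (0:ℝ) s₀,
        ∀ ω : EuclideanSpace ℝ (Fin (d + 1)), ‖ω‖ = 1 →
          ∃ σ : ℝ → EuclideanSpace ℝ (Fin (d + 1)),
            ContinuousOn σ (Set.Icc t₀ s₀) ∧
            σ t₀ = ω ∧ σ s₀ = q ∧
            (∀ τ ∈ Set.Icc t₀ s₀, ‖σ τ‖ = 1) ∧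
            PiecewiseC1SpeedLt a σ t₀ s₀ := by
  intro s₀ hs₀ q hq
  have hinv_pos : ∀ t ∈ Ioi 0, 0 < 1 / a t := fun t ht => one_div_pos.2 (ha_pos t ht)
  have hinv_cont : ContinuousOn (fun t => 1 / a t) (Ioi 0) :=
    continuousOn_const.div ha_cont fun t ht => (ha_pos t ht).ne'
  obtain ⟨t₀, hπ, ht₀⟩ := ((tendsto_intervalIntegral_nhdsGT_atTop hinv_cont
    (fun t ht => (hinv_pos t ht).le) ha_noPH hs₀).eventually_gt_atTop π |>.and
      (Ioo_mem_nhdsGT hs₀)).exists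
  have hIcc : Icc t₀ s₀ ⊆ Ioi 0 := fun x hx => ht₀.1.trans_le hx.1
  refine ⟨t₀, ht₀, fun ω hω => ?_⟩
  obtain ⟨u, hu, hqu, α, hα, rfl⟩ := exists_greatCircle_eq (by rw [finrank_euclideanSpace_fin]; omega) hq hω
  obtain ⟨θ, θ', hθt₀, hθs₀, hθ', hθ⟩ := exists_hasDerivWithinAt_of_lt_intervalIntegral ht₀.2.le
    (hinv_cont.mono hIcc) (fun x hx => hinv_pos x (hIcc hx)) hα.1 (hα.2.trans_lt hπ)
  refine ⟨greatCircle q u ∘ θ, ?_, by simp [hθt₀], by simp [hθs₀],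
    fun τ _ => norm_greatCircle hq hu hqu _, .greatCircle_comp hq hu hqu ht₀.2 hθ' hθ⟩
  exact (continuous_greatCircle q u).comp_continuousOn
    fun x hx => (hθ x hx).1.continuousWithinAt
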